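/- arXiv:2002.00292 — 8 statements merged into one kernel-verified Lean document; each statement's English description precedes it below -/
import Mathlib

section
/- Let 0 < δ ≤ Δ. The inequality (Δ+δ)^2 ≤ 4Δ√(Δδ) holds if and only if δ/Δ ≥ t_0, where t_0 is the unique root of t^3 + 5t^2 + 11t - 1 in (0,1). Equivalently, 1/(4Δ) ≤ √(Δδ)/(Δ+δ)^2 if and only if δ/Δ ≥ t_0. -/
theorem ineq_iff_ratio_ge_root (δ Δ t₀ : ℝ) (hδ : 0 < δ) (hδΔ : δ ≤ Δ)
    (ht₀ : t₀ ∈ Set.Ioo (0:ℝ) 1 ∧ t₀^3 + 5*t₀^2 + 11*t₀ - 1 = 0) :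
    ((Δ + δ)^2 ≤ 4 * Δ * Real.sqrt (Δ * δ) ↔ t₀ ≤ δ / Δ) ∧
    (1 / (4 * Δ) ≤ Real.sqrt (Δ * δ) / (Δ + δ)^2 ↔ t₀ ≤ δ / Δ) := by
  obtain ⟨⟨ht0, ht1⟩, heq⟩ := ht₀
  have hΔ : 0 < Δ := lt_of_lt_of_le hδ hδΔ
  set s := Real.sqrt (Δ * δ) with hs
  have hsq : s ^ 2 = Δ * δ := Real.sq_sqrt (by positivity)
  have hsnn : 0 ≤ s := Real.sqrt_nonneg _
  have hb2 : (4*Δ*s)^2 = 16*Δ^3*δ := by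
    rw [mul_pow, mul_pow, hsq]; ring
  have key : ((Δ + δ)^2 ≤ 4 * Δ * s ↔ t₀ ≤ δ / Δ) := by
    constructor
    · intro h
      rw [le_div_iff₀ hΔ]
      by_contra hlt
      push_neg at hlt
      have h4 : (Δ+δ)^4 ≤ 16*Δ^3*δ := by
        have h2 := mul_le_mul h h (by positivity) (by positivity)
        nlinarith [hb2]
      have h1 : 0 < t₀*Δ - δ := by linarith
      have h2 : 0 < (t₀*Δ)^2 + (t₀*Δ)*δ + δ^2 + 5*Δ*((t₀*Δ)+δ) + 11*Δ^2 := by positivity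
      -- P := δ³+5δ²Δ+11δΔ² - Δ³ < 0
      have hP : δ^3 + 5*δ^2*Δ + 11*δ*Δ^2 - Δ^3 < 0 := by
        nlinarith [mul_pos h1 h2]
      have hdΔ : 0 < Δ - δ := by nlinarith [mul_pos ht0 hΔ]
      nlinarith [mul_pos hdΔ (by linarith : 0 < Δ^3 - (δ^3 + 5*δ^2*Δ + 11*δ*Δ^2))]
    · intro h
      rw [le_div_iff₀ hΔ] at h
      have h1 : 0 ≤ δ - t₀*Δ := by linarith
      have h2 : 0 < δ^2 + δ*(t₀*Δ) + (t₀*Δ)^2 + 5*Δ*(δ+(t₀*Δ)) + 11*Δ^2 := by positivity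
      have hP : 0 ≤ δ^3 + 5*δ^2*Δ + 11*δ*Δ^2 - Δ^3 := by
        nlinarith [mul_nonneg h1 h2.le]
      have h4 : (Δ+δ)^4 ≤ 16*Δ^3*δ := by
        nlinarith [mul_nonneg (sub_nonneg.2 hδΔ) hP]
      by_contra h'
      push_neg at h'
      nlinarith [hb2, h4, mul_nonneg (mul_nonneg (by norm_num : (0:ℝ) ≤ 4) hΔ.le) hsnn,
        sq_nonneg ((Δ+δ)^2 + 4*Δ*s)]
  refine ⟨key, ?_⟩
  rw [div_le_div_iff₀ (by positivity) (by positivity), ← key]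
  constructor <;> intro h <;> nlinarith
end

section
/- For the function g(x,y) = √(xy)/(x+y)^2 defined on [δ,Δ]×[δ,Δ] with 0 < δ ≤ Δ, the maximum value of g is 1/(4δ) and the minimum value is min{1/(4Δ), √(Δδ)/(Δ+δ)^2}. -/
open Set

lemma convex_aux (v : ℝ) : ConvexOn ℝ (Set.Ioi (0:ℝ)) (fun u : ℝ => (u^2+v^2)^2/u) := by
  have h1 : ConvexOn ℝ (Set.Ioi (0:ℝ)) (fun u : ℝ => u^3 + (2*v^2*u + v^4 * u⁻¹)) := by
    apply ConvexOn.add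
    · exact (convexOn_pow 3).subset Set.Ioi_subset_Ici_self (convex_Ioi 0)
    apply ConvexOn.add
    · have := (convexOn_id (convex_Ioi (0:ℝ))).smul (c := 2*v^2) (by positivity)
      simpa [smul_eq_mul] using this
    · have := (convexOn_zpow (-1 : ℤ) (𝕜 := ℝ)).smul (c := v^4) (by positivity)
      simpa [smul_eq_mul, zpow_neg] using this
  refine h1.congr fun u hu => ?_
  have hu0 : (u:ℝ) ≠ 0 := ne_of_gt hu
  field_simp
  ring

lemma corner_bound {a b : ℝ} (ha : 0 < a) (hab : a ≤ b) {u v : ℝ}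
    (hu : u ∈ Set.Icc a b) (hv : v ∈ Set.Icc a b) :
    (u^2+v^2)^2/(u*v) ≤ max (4*b^2) ((a^2+b^2)^2/(a*b)) := by
  have hb : 0 < b := lt_of_lt_of_le ha hab
  have hu0 : 0 < u := lt_of_lt_of_le ha hu.1
  have hv0 : 0 < v := lt_of_lt_of_le ha hv.1
  have key : ∀ w : ℝ, ∀ z ∈ Set.Icc a b,
      (z^2+w^2)^2/z ≤ max ((a^2+w^2)^2/a) ((b^2+w^2)^2/b) := by
    intro w z hz
    exact (convex_aux w).le_on_segment (Set.mem_Ioi.2 ha) (Set.mem_Ioi.2 hb)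
      (by rwa [segment_eq_Icc hab])
  have h1 : (u^2+v^2)^2/(u*v) ≤ max ((a^2+v^2)^2/(a*v)) ((b^2+v^2)^2/(b*v)) := by
    calc (u^2+v^2)^2/(u*v) = ((u^2+v^2)^2/u)/v := by rw [div_div]
    _ ≤ (max ((a^2+v^2)^2/a) ((b^2+v^2)^2/b))/v := by
        gcongr
        exact key v u hu
    _ = max (((a^2+v^2)^2/a)/v) (((b^2+v^2)^2/b)/v) := by
        rw [max_div_div_right (le_of_lt hv0)]
    _ = max ((a^2+v^2)^2/(a*v)) ((b^2+v^2)^2/(b*v)) := by rw [div_div, div_div]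
  have h2 : ∀ c : ℝ, 0 < c →
      (c^2+v^2)^2/(c*v) ≤ max ((a^2+c^2)^2/(a*c)) ((b^2+c^2)^2/(b*c)) := by
    intro c hc
    calc (c^2+v^2)^2/(c*v) = ((v^2+c^2)^2/v)/c := by rw [div_div]; ring_nf
    _ ≤ (max ((a^2+c^2)^2/a) ((b^2+c^2)^2/b))/c := by
        gcongr
        exact key c v hv
    _ = max (((a^2+c^2)^2/a)/c) (((b^2+c^2)^2/b)/c) := by
        rw [max_div_div_right (le_of_lt hc)]
    _ = max ((a^2+c^2)^2/(a*c)) ((b^2+c^2)^2/(b*c)) := by rw [div_div, div_div]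
  have ea : (a^2+a^2)^2/(a*a) = 4*a^2 := by field_simp; ring
  have eb : (b^2+b^2)^2/(b*b) = 4*b^2 := by field_simp; ring
  have eab : (b^2+a^2)^2/(b*a) = (a^2+b^2)^2/(a*b) := by rw [mul_comm b a]; ring_nf
  have ha2 : 4*a^2 ≤ 4*b^2 := by nlinarith
  calc (u^2+v^2)^2/(u*v)
      ≤ max ((a^2+v^2)^2/(a*v)) ((b^2+v^2)^2/(b*v)) := h1
    _ ≤ max (4*b^2) ((a^2+b^2)^2/(a*b)) := by
        apply max_le
        · refine le_trans (h2 a ha) ?_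
          rw [ea, eab]
          exact max_le_max ha2 le_rfl
        · refine le_trans (h2 b hb) ?_
          rw [eb, max_comm]

theorem max_min_of_g (δ Δ : ℝ) (hδ : 0 < δ) (hδΔ : δ ≤ Δ) :
    IsGreatest {z : ℝ | ∃ x ∈ Set.Icc δ Δ, ∃ y ∈ Set.Icc δ Δ,
        z = Real.sqrt (x * y) / (x + y)^2} (1 / (4 * δ)) ∧
    IsLeast {z : ℝ | ∃ x ∈ Set.Icc δ Δ, ∃ y ∈ Set.Icc δ Δ,
        z = Real.sqrt (x * y) / (x + y)^2}
      (min (1 / (4 * Δ)) (Real.sqrt (Δ * δ) / (Δ + δ)^2)) := by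
  have hΔ : 0 < Δ := lt_of_lt_of_le hδ hδΔ
  have hmemδ : 1 / (4 * δ) ∈ {z : ℝ | ∃ x ∈ Set.Icc δ Δ, ∃ y ∈ Set.Icc δ Δ,
      z = Real.sqrt (x * y) / (x + y)^2} := by
    refine ⟨δ, ⟨le_rfl, hδΔ⟩, δ, ⟨le_rfl, hδΔ⟩, ?_⟩
    rw [Real.sqrt_mul_self hδ.le]
    field_simp
    ring
  have hmemΔ : 1 / (4 * Δ) ∈ {z : ℝ | ∃ x ∈ Set.Icc δ Δ, ∃ y ∈ Set.Icc δ Δ,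
      z = Real.sqrt (x * y) / (x + y)^2} := by
    refine ⟨Δ, ⟨hδΔ, le_rfl⟩, Δ, ⟨hδΔ, le_rfl⟩, ?_⟩
    rw [Real.sqrt_mul_self hΔ.le]
    field_simp
    ring
  have hmemc : Real.sqrt (Δ * δ) / (Δ + δ)^2 ∈ {z : ℝ | ∃ x ∈ Set.Icc δ Δ, ∃ y ∈ Set.Icc δ Δ,
      z = Real.sqrt (x * y) / (x + y)^2} := ⟨Δ, ⟨hδΔ, le_rfl⟩, δ, ⟨le_rfl, hδΔ⟩, rfl⟩
  constructor
  · refine ⟨hmemδ, ?_⟩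
    rintro z ⟨x, hx, y, hy, rfl⟩
    have hx0 : 0 < x := lt_of_lt_of_le hδ hx.1
    have hy0 : 0 < y := lt_of_lt_of_le hδ hy.1
    have hs : δ ≤ Real.sqrt (x * y) := by
      rw [show δ = Real.sqrt (δ * δ) by rw [Real.sqrt_mul_self hδ.le]]
      exact Real.sqrt_le_sqrt (by nlinarith [hx.1, hy.1])
    have hsq : Real.sqrt (x * y) ^ 2 = x * y := Real.sq_sqrt (by positivity)
    rw [div_le_div_iff₀ (by positivity) (by positivity)]
    nlinarith [sq_nonneg (x - y), hs, hsq, Real.sqrt_nonneg (x*y)]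
  · constructor
    · rcases le_total (1 / (4 * Δ)) (Real.sqrt (Δ * δ) / (Δ + δ)^2) with h | h
      · rwa [min_eq_left h]
      · rwa [min_eq_right h]
    · rintro z ⟨x, hx, y, hy, rfl⟩
      have hx0 : 0 < x := lt_of_lt_of_le hδ hx.1
      have hy0 : 0 < y := lt_of_lt_of_le hδ hy.1
      set a := Real.sqrt δ with hadef
      set b := Real.sqrt Δ with hbdef
      have ha : 0 < a := Real.sqrt_pos.2 hδ
      have hb : 0 < b := Real.sqrt_pos.2 hΔ
      have hab : a ≤ b := Real.sqrt_le_sqrt hδΔ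
      have hu : Real.sqrt x ∈ Set.Icc a b :=
        ⟨Real.sqrt_le_sqrt hx.1, Real.sqrt_le_sqrt hx.2⟩
      have hv : Real.sqrt y ∈ Set.Icc a b :=
        ⟨Real.sqrt_le_sqrt hy.1, Real.sqrt_le_sqrt hy.2⟩
      have hcb := corner_bound ha hab hu hv
      have hux : Real.sqrt x ^ 2 = x := Real.sq_sqrt hx0.le
      have hvy : Real.sqrt y ^ 2 = y := Real.sq_sqrt hy0.le
      have huv : Real.sqrt x * Real.sqrt y = Real.sqrt (x * y) :=
        (Real.sqrt_mul hx0.le y).symm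
      have ha2 : a ^ 2 = δ := Real.sq_sqrt hδ.le
      have hb2 : b ^ 2 = Δ := Real.sq_sqrt hΔ.le
      have habm : a * b = Real.sqrt (Δ * δ) := by
        rw [hadef, hbdef, ← Real.sqrt_mul hδ.le, mul_comm]
      rw [hux, hvy, huv, ha2, hb2, habm] at hcb
      -- hcb : (x+y)^2 / sqrt (x*y) ≤ max (4*Δ) ((δ+Δ)^2 / sqrt (Δ*δ))
      have hsxy : 0 < Real.sqrt (x * y) := Real.sqrt_pos.2 (by positivity)
      have hD : 0 < (x + y)^2 / Real.sqrt (x * y) := by positivity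
      have hrec : 1 / max (4*Δ) ((δ+Δ)^2 / Real.sqrt (Δ*δ)) ≤
          Real.sqrt (x * y) / (x + y)^2 := by
        rw [show Real.sqrt (x * y) / (x + y)^2 = 1 / ((x + y)^2 / Real.sqrt (x * y)) by
          rw [one_div_div]]
        exact one_div_le_one_div_of_le hD hcb
      refine le_trans ?_ hrec
      have hsΔδ : 0 < Real.sqrt (Δ * δ) := Real.sqrt_pos.2 (by positivity)
      rcases max_cases (4*Δ) ((δ+Δ)^2 / Real.sqrt (Δ*δ)) with ⟨he, _⟩ | ⟨he, _⟩
      · rw [he]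
        exact min_le_left _ _
      · rw [he, one_div_div, add_comm δ Δ]
        exact min_le_right _ _
end

section
/- Let G be a finite simple graph with no isolated vertices, minimum degree δ and maximum degree Δ. Then 4δ·χ_{-2}(G) ≤ R(G) ≤ max{4Δ, (Δ+δ)^2/√(Δδ)}·χ_{-2}(G), where R(G) = Σ_{uv∈E(G)} 1/√(d_u d_v) is the Randić index and χ_{-2}(G) = Σ_{uv∈E(G)} (d_u+d_v)^{-2} is the general sum-connectivity index with exponent -2. -/
open Finset

variable {V : Type*}

/-- Randić index: `Σ_{uv∈E} (d_u d_v)^{-1/2}`, written as half a double sum over vertices. -/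
noncomputable def randicIndex [Fintype V] (G : SimpleGraph V) [DecidableRel G.Adj] : ℝ :=
  (1 / 2) * ∑ u, ∑ v ∈ G.neighborFinset u,
    1 / Real.sqrt ((G.degree u : ℝ) * (G.degree v : ℝ))

/-- General sum-connectivity index with exponent -2: `Σ_{uv∈E} (d_u+d_v)^{-2}`. -/
noncomputable def sumConnectivityNeg2 [Fintype V] (G : SimpleGraph V) [DecidableRel G.Adj] : ℝ :=
  (1 / 2) * ∑ u, ∑ v ∈ G.neighborFinset u,
    1 / ((G.degree u : ℝ) + (G.degree v : ℝ))^2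


/-! For degrees `x, y ∈ [δ, Δ]` both bounds hold edge by edge. The lower one is AM–GM:
`4δ √(xy) ≤ 2δ (x + y) ≤ (x + y)²`. For the upper one, substituting `x = s²`, `y = r²` turns
`(x + y)² / √(xy)` into `s³/r + 2sr + r³/s`, which is convex in `s` and in `r` separately on
`(0, ∞)`; so its maximum over `[√δ, √Δ]²` is attained at a corner, where it is `4δ`, `4Δ` or
`(Δ + δ)² / √(Δδ)`. -/

open Set

section ConvexCorners

variable {𝕜 E F β : Type*} [Semiring 𝕜] [PartialOrder 𝕜]
  [AddCommMonoid E] [Module 𝕜 E] [AddCommMonoid F] [Module 𝕜 F]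
  [AddCommMonoid β] [LinearOrder β] [IsOrderedAddMonoid β] [Module 𝕜 β] [PosSMulStrictMono 𝕜 β]

theorem le_max_corners_of_convexOn_separately {f : E → F → β} {s : Set E} {t : Set F}
    (hconv₁ : ∀ y ∈ t, ConvexOn 𝕜 s (f · y)) (hconv₂ : ∀ x ∈ s, ConvexOn 𝕜 t (f x))
    {a a' : E} {b b' : F} (ha : a ∈ s) (ha' : a' ∈ s) (hb : b ∈ t) (hb' : b' ∈ t)
    {x : E} {y : F} (hx : x ∈ segment 𝕜 a a') (hy : y ∈ segment 𝕜 b b') :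
    f x y ≤ max (max (f a b) (f a b')) (max (f a' b) (f a' b')) :=
  have hyt : y ∈ t := (hconv₂ a ha).1.segment_subset hb hb' hy
  ((hconv₁ y hyt).le_on_segment ha ha' hx).trans <| max_le_max
    ((hconv₂ a ha).le_on_segment hb hb' hy) ((hconv₂ a' ha').le_on_segment hb hb' hy)

end ConvexCorners

theorem convexOn_sq_add_sq_sq_div_mul {r : ℝ} (hr : 0 < r) :
    ConvexOn ℝ (Ioi 0) fun s : ℝ => (s ^ 2 + r ^ 2) ^ 2 / (s * r) := by
  have hcubic : ConvexOn ℝ (Ioi 0) fun s : ℝ => s ^ 3 :=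
    (convexOn_pow 3).subset Ioi_subset_Ici_self (convex_Ioi 0)
  have hsum := ((hcubic.smul (inv_pos.2 hr).le).add
    ((convexOn_id (convex_Ioi (0 : ℝ))).smul (by positivity : (0 : ℝ) ≤ 2 * r))).add
    ((convexOn_zpow (-1)).smul (by positivity : (0 : ℝ) ≤ r ^ 3))
  refine hsum.congr fun s (hs : 0 < s) => ?_
  simp only [Pi.add_apply, smul_eq_mul, id, zpow_neg, zpow_one]
  field_simp
  ring

theorem sq_add_sq_sq_div_mul_sqrt {p q : ℝ} (hp : 0 ≤ p) (hq : 0 ≤ q) :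
    (√p ^ 2 + √q ^ 2) ^ 2 / (√p * √q) = (p + q) ^ 2 / √(p * q) := by
  rw [Real.sq_sqrt hp, Real.sq_sqrt hq, Real.sqrt_mul hp]

theorem sq_add_div_sqrt_mul_le_max {d D x y : ℝ} (hd : 0 < d) (hx : x ∈ Icc d D)
    (hy : y ∈ Icc d D) :
    (x + y) ^ 2 / √(x * y) ≤ max (4 * D) ((D + d) ^ 2 / √(D * d)) := by
  have hD : 0 < D := hd.trans_le (hx.1.trans hx.2)
  have hsqrt_mem : ∀ z ∈ Icc d D, √z ∈ segment ℝ √d √D := fun z hz => by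
    rw [segment_eq_Icc (Real.sqrt_le_sqrt (hz.1.trans hz.2))]
    exact ⟨Real.sqrt_le_sqrt hz.1, Real.sqrt_le_sqrt hz.2⟩
  have hconv : ∀ r ∈ Ioi (0 : ℝ), ConvexOn ℝ (Ioi 0) fun s : ℝ => (s ^ 2 + r ^ 2) ^ 2 / (s * r) :=
    fun r hr => convexOn_sq_add_sq_sq_div_mul hr
  have hcorner := le_max_corners_of_convexOn_separately hconv
    (fun s hs => by simpa only [add_comm (s ^ 2), mul_comm s] using hconv s hs)
    (Real.sqrt_pos.2 hd) (Real.sqrt_pos.2 hD) (Real.sqrt_pos.2 hd) (Real.sqrt_pos.2 hD)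
    (hsqrt_mem x hx) (hsqrt_mem y hy)
  simp only [sq_add_sq_sq_div_mul_sqrt, hd.le, hD.le, (hd.trans_le hx.1).le,
    (hd.trans_le hy.1).le] at hcorner
  have hdiag : ∀ z : ℝ, 0 < z → (z + z) ^ 2 / √(z * z) = 4 * z := fun z hz => by
    rw [Real.sqrt_mul_self hz.le]
    field_simp
    ring
  rw [hdiag d hd, hdiag D hD, add_comm d D, mul_comm d D] at hcorner
  have hdD : 4 * d ≤ 4 * D := by linarith [hx.1.trans hx.2]
  exact hcorner.trans <| max_le (max_le (hdD.trans (le_max_left _ _)) (le_max_right _ _))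
    (max_le (le_max_right _ _) (le_max_left _ _))

theorem four_mul_div_sq_add_le_inv_sqrt_mul {d x y : ℝ} (hd : 0 < d) (hx : d ≤ x) (hy : d ≤ y) :
    4 * d * (1 / (x + y) ^ 2) ≤ 1 / √(x * y) := by
  have hx0 : 0 < x := hd.trans_le hx
  have hy0 : 0 < y := hd.trans_le hy
  have hxy : 0 < √(x * y) := by positivity
  have hamgm : √(x * y) ≤ (x + y) / 2 := by
    rw [Real.sqrt_le_left (by linarith)]
    nlinarith [sq_nonneg (x - y)]
  rw [mul_one_div, div_le_div_iff₀ (by positivity) hxy]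
  nlinarith

theorem inv_sqrt_mul_le_max_mul_div_sq_add {d D x y : ℝ} (hd : 0 < d) (hx : x ∈ Icc d D)
    (hy : y ∈ Icc d D) :
    1 / √(x * y) ≤ max (4 * D) ((D + d) ^ 2 / √(D * d)) * (1 / (x + y) ^ 2) := by
  have hxy : 0 < x + y := by linarith [hx.1, hy.1]
  rw [mul_one_div, le_div_iff₀ (by positivity), one_div_mul_eq_div]
  exact sq_add_div_sqrt_mul_le_max hd hx hy

namespace SimpleGraph

variable [Fintype V] (G : SimpleGraph V) [DecidableRel G.Adj]

noncomputable def degreeEdgeSum (φ : ℝ → ℝ → ℝ) : ℝ :=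
  (1 / 2) * ∑ u, ∑ v ∈ G.neighborFinset u, φ (G.degree u) (G.degree v)

theorem randicIndex_eq_degreeEdgeSum :
    randicIndex G = G.degreeEdgeSum fun x y => 1 / √(x * y) := rfl

theorem sumConnectivityNeg2_eq_degreeEdgeSum :
    sumConnectivityNeg2 G = G.degreeEdgeSum fun x y => 1 / (x + y) ^ 2 := rfl

theorem degreeEdgeSum_const_mul (c : ℝ) (φ : ℝ → ℝ → ℝ) :
    G.degreeEdgeSum (fun x y => c * φ x y) = c * G.degreeEdgeSum φ := by
  simp only [degreeEdgeSum, ← Finset.mul_sum]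
  ring

variable {G} in
theorem degreeEdgeSum_mono {φ ψ : ℝ → ℝ → ℝ}
    (h : ∀ u v, G.Adj u v → φ (G.degree u) (G.degree v) ≤ ψ (G.degree u) (G.degree v)) :
    G.degreeEdgeSum φ ≤ G.degreeEdgeSum ψ := by
  unfold degreeEdgeSum
  gcongr with u _ v hv
  exact h u v ((G.mem_neighborFinset u v).1 hv)

end SimpleGraph

theorem randic_sumconn_bounds [Fintype V] (G : SimpleGraph V) [DecidableRel G.Adj]
    (hiso : ∀ v : V, 0 < G.degree v) :
    4 * (G.minDegree : ℝ) * sumConnectivityNeg2 G ≤ randicIndex G ∧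
    randicIndex G ≤ max (4 * (G.maxDegree : ℝ))
      (((G.maxDegree : ℝ) + (G.minDegree : ℝ))^2 /
        Real.sqrt ((G.maxDegree : ℝ) * (G.minDegree : ℝ))) * sumConnectivityNeg2 G := by
  have hδ : ∀ u : V, (0 : ℝ) < G.minDegree := fun u => by
    have : Nonempty V := ⟨u⟩
    exact_mod_cast G.le_minDegree_of_forall_le_degree 1 hiso
  have hdeg : ∀ u : V, (G.degree u : ℝ) ∈ Icc (G.minDegree : ℝ) G.maxDegree := fun u =>
    ⟨mod_cast G.minDegree_le_degree u, mod_cast G.degree_le_maxDegree u⟩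
  rw [G.randicIndex_eq_degreeEdgeSum, G.sumConnectivityNeg2_eq_degreeEdgeSum,
    ← G.degreeEdgeSum_const_mul, ← G.degreeEdgeSum_const_mul]
  exact ⟨SimpleGraph.degreeEdgeSum_mono fun u v _ =>
      four_mul_div_sq_add_le_inv_sqrt_mul (hδ u) (hdeg u).1 (hdeg v).1,
    SimpleGraph.degreeEdgeSum_mono fun u v _ =>
      inv_sqrt_mul_le_max_mul_div_sq_add (hδ u) (hdeg u) (hdeg v)⟩
end

section
/- Let G be a finite simple graph with no isolated vertices, minimum degree δ and maximum degree Δ, and suppose δ/Δ ≥ t_0 where t_0 is the unique root of t^3+5t^2+11t-1 in (0,1). Then R(G) ≤ 4Δ·χ_{-2}(G), with equality if and only if G is regular. -/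
open Finset

variable {V : Type*}

/-!
Edge by edge, it suffices to show `(x + y)⁴ ≤ 16 Δ² x y` for degrees `x ≤ y` in `[t₀ Δ, Δ]`.
This splits as `(x + y)⁴ ≤ 16 x y³ ≤ 16 Δ² x y`, where the first step holds because
`(x + y)⁴ - 16 x y³ = (x - y) (x³ + 5x²y + 11xy² - y³)` and the cubic factor, which vanishes at
`x = t₀ y`, is `x - t₀ y` times a positive quadratic. Equality forces `y = Δ` and `x ∈ {y, t₀ Δ}`;
as `t₀` is an irrational root of a monic integer cubic, no degree equals `t₀ Δ`, so every edge joins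
two vertices of maximum degree.
-/

open Polynomial in
theorem irrational_of_cubic_root {t : ℝ} (ht : t ∈ Set.Ioo (0 : ℝ) 1)
    (hroot : t ^ 3 + 5 * t ^ 2 + 11 * t - 1 = 0) : Irrational t := by
  rintro ⟨q, rfl⟩
  have hmonic : (X ^ 3 + C 5 * X ^ 2 + C 11 * X - C 1 : ℤ[X]).Monic := by monicity!
  obtain ⟨n, rfl, -⟩ := exists_integer_of_is_root_of_monic hmonic (r := q)
    (by simp only [map_sub, map_add, map_mul, map_pow, aeval_X, aeval_C]; exact_mod_cast hroot)
  obtain ⟨h0, h1⟩ := ht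
  simp only [algebraMap_int_eq, eq_intCast, Rat.cast_intCast, Int.cast_pos] at h0 h1
  norm_cast at h1
  omega

section Quartic

variable {t Δ x y : ℝ}

theorem cubic_eq_mul_of_root (hroot : t ^ 3 + 5 * t ^ 2 + 11 * t - 1 = 0) (x y : ℝ) :
    x ^ 3 + 5 * x ^ 2 * y + 11 * x * y ^ 2 - y ^ 3 =
      (x - t * y) * (x ^ 2 + (t + 5) * x * y + (t ^ 2 + 5 * t + 11) * y ^ 2) := by
  linear_combination y ^ 3 * hroot

theorem sum_pow_four_sub_eq (x y : ℝ) : (x + y) ^ 4 - 16 * x * y ^ 3 =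
    (x - y) * (x ^ 3 + 5 * x ^ 2 * y + 11 * x * y ^ 2 - y ^ 3) := by
  ring

theorem sum_pow_four_le_of_le (ht : 0 < t) (hroot : t ^ 3 + 5 * t ^ 2 + 11 * t - 1 = 0)
    (hy : 0 < y) (hx : t * y ≤ x) (hxy : x ≤ y) : (x + y) ^ 4 ≤ 16 * x * y ^ 3 := by
  have : 0 ≤ x ^ 3 + 5 * x ^ 2 * y + 11 * x * y ^ 2 - y ^ 3 := by
    have : 0 < x := (by positivity : 0 < t * y).trans_le hx
    rw [cubic_eq_mul_of_root hroot]
    exact mul_nonneg (by linarith) (by positivity)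
  linarith [sum_pow_four_sub_eq x y, mul_nonpos_of_nonpos_of_nonneg (sub_nonpos.2 hxy) this]

theorem sum_pow_four_lt_of_lt (ht : 0 < t) (hroot : t ^ 3 + 5 * t ^ 2 + 11 * t - 1 = 0)
    (hy : 0 < y) (hx : t * y < x) (hxy : x < y) : (x + y) ^ 4 < 16 * x * y ^ 3 := by
  have : 0 < x ^ 3 + 5 * x ^ 2 * y + 11 * x * y ^ 2 - y ^ 3 := by
    have : 0 < x := (by positivity : 0 < t * y).trans hx
    rw [cubic_eq_mul_of_root hroot]
    exact mul_pos (by linarith) (by positivity)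
  linarith [sum_pow_four_sub_eq x y, mul_neg_of_neg_of_pos (sub_neg.2 hxy) this]

theorem sum_pow_four_le (ht : 0 < t) (hroot : t ^ 3 + 5 * t ^ 2 + 11 * t - 1 = 0) (hΔ : 0 < Δ)
    (hx : t * Δ ≤ x) (hxΔ : x ≤ Δ) (hy : t * Δ ≤ y) (hyΔ : y ≤ Δ) :
    (x + y) ^ 4 ≤ 16 * Δ ^ 2 * (x * y) := by
  wlog hxy : x ≤ y generalizing x y
  · linarith [this hy hyΔ hx hxΔ (le_of_not_ge hxy)]
  have hx0 : 0 < x := (by positivity : 0 < t * Δ).trans_le hx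
  have hy0 : 0 < y := hx0.trans_le hxy
  calc (x + y) ^ 4 ≤ 16 * x * y ^ 3 :=
        sum_pow_four_le_of_le ht hroot hy0 ((mul_le_mul_of_nonneg_left hyΔ ht.le).trans hx) hxy
    _ ≤ 16 * Δ ^ 2 * (x * y) := by nlinarith [mul_pos hx0 hy0, pow_le_pow_left₀ hy0.le hyΔ 2]

theorem sum_pow_four_eq_iff (ht : 0 < t) (hroot : t ^ 3 + 5 * t ^ 2 + 11 * t - 1 = 0)
    (hΔ : 0 < Δ) (hx : t * Δ < x) (hxΔ : x ≤ Δ) (hy : t * Δ < y) (hyΔ : y ≤ Δ) :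
    (x + y) ^ 4 = 16 * Δ ^ 2 * (x * y) ↔ x = Δ ∧ y = Δ := by
  refine ⟨fun heq => ?_, fun ⟨hx, hy⟩ => by rw [hx, hy]; ring⟩
  wlog hxy : x ≤ y generalizing x y
  · exact (this hy hyΔ hx hxΔ (by linarith) (le_of_not_ge hxy)).symm
  have hx0 : 0 < x := (by positivity : 0 < t * Δ).trans hx
  have hy0 : 0 < y := hx0.trans_le hxy
  obtain rfl : x = y := by
    by_contra hne
    have := sum_pow_four_lt_of_lt ht hroot hy0
      ((mul_le_mul_of_nonneg_left hyΔ ht.le).trans_lt hx) (lt_of_le_of_ne hxy hne)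
    nlinarith [mul_pos hx0 hy0, pow_le_pow_left₀ hy0.le hyΔ 2]
  have : x ^ 2 = Δ ^ 2 := by nlinarith [pow_pos hx0 2]
  exact ⟨by nlinarith, by nlinarith⟩

end Quartic

theorem one_div_sqrt_mul_le_iff {Δ x y : ℝ} (hx : 0 < x) (hy : 0 < y) (hΔ : 0 ≤ Δ) :
    1 / √(x * y) ≤ 4 * Δ / (x + y) ^ 2 ↔ (x + y) ^ 4 ≤ 16 * Δ ^ 2 * (x * y) := by
  rw [div_le_div_iff₀ (by positivity) (by positivity), one_mul,
    ← pow_le_pow_iff_left₀ (by positivity) (by positivity) two_ne_zero, mul_pow,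
    Real.sq_sqrt (by positivity)]
  ring_nf

theorem one_div_sqrt_mul_eq_iff {Δ x y : ℝ} (hx : 0 < x) (hy : 0 < y) (hΔ : 0 ≤ Δ) :
    1 / √(x * y) = 4 * Δ / (x + y) ^ 2 ↔ (x + y) ^ 4 = 16 * Δ ^ 2 * (x * y) := by
  rw [div_eq_div_iff (by positivity) (by positivity), one_mul,
    ← pow_left_inj₀ (by positivity) (by positivity) two_ne_zero, mul_pow,
    Real.sq_sqrt (by positivity)]
  ring_nf

section Indices

variable [Fintype V] (G : SimpleGraph V) [DecidableRel G.Adj]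

theorem SimpleGraph.exists_isRegularOfDegree_iff_forall_degree_eq_maxDegree :
    (∃ k, G.IsRegularOfDegree k) ↔ ∀ v, G.degree v = G.maxDegree := by
  refine ⟨fun ⟨k, hk⟩ v => ?_, fun h => ⟨_, h⟩⟩
  have : Nonempty V := ⟨v⟩
  rw [hk.degree_eq, hk.maxDegree_eq]

theorem mul_sumConnectivityNeg2 (c : ℝ) :
    c * sumConnectivityNeg2 G =
      1 / 2 * ∑ u, ∑ v ∈ G.neighborFinset u, c / ((G.degree u : ℝ) + G.degree v) ^ 2 := by
  rw [sumConnectivityNeg2, mul_left_comm, mul_sum]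
  simp_rw [mul_sum, mul_one_div]

variable {G}

theorem randicIndex_le_mul_sumConnectivityNeg2 {c : ℝ}
    (h : ∀ u v, G.Adj u v → 1 / √((G.degree u : ℝ) * G.degree v) ≤
      c / ((G.degree u : ℝ) + G.degree v) ^ 2) :
    randicIndex G ≤ c * sumConnectivityNeg2 G := by
  rw [mul_sumConnectivityNeg2, randicIndex]
  exact mul_le_mul_of_nonneg_left (sum_le_sum fun u _ => sum_le_sum fun v hv =>
    h u v ((G.mem_neighborFinset u v).1 hv)) (by norm_num)

theorem randicIndex_eq_mul_sumConnectivityNeg2_iff {c : ℝ}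
    (h : ∀ u v, G.Adj u v → 1 / √((G.degree u : ℝ) * G.degree v) ≤
      c / ((G.degree u : ℝ) + G.degree v) ^ 2) :
    randicIndex G = c * sumConnectivityNeg2 G ↔ ∀ u v, G.Adj u v →
      1 / √((G.degree u : ℝ) * G.degree v) = c / ((G.degree u : ℝ) + G.degree v) ^ 2 := by
  have hle (u : V) : ∀ v ∈ G.neighborFinset u, 1 / √((G.degree u : ℝ) * G.degree v) ≤
      c / ((G.degree u : ℝ) + G.degree v) ^ 2 :=
    fun v hv => h u v ((G.mem_neighborFinset u v).1 hv)
  rw [mul_sumConnectivityNeg2, randicIndex, mul_right_inj' (by norm_num),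
    sum_eq_sum_iff_of_le fun u _ => sum_le_sum (hle u)]
  simp only [mem_univ, forall_const, sum_eq_sum_iff_of_le (hle _), G.mem_neighborFinset]

end Indices

theorem randic_upper_regular_general [Fintype V] (G : SimpleGraph V) [DecidableRel G.Adj]
    (t₀ : ℝ)
    (ht₀ : t₀ ∈ Set.Ioo (0:ℝ) 1 ∧ t₀^3 + 5*t₀^2 + 11*t₀ - 1 = 0)
    (hratio : t₀ ≤ (G.minDegree : ℝ) / (G.maxDegree : ℝ)) :
    randicIndex G ≤ 4 * (G.maxDegree : ℝ) * sumConnectivityNeg2 G ∧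
    (randicIndex G = 4 * (G.maxDegree : ℝ) * sumConnectivityNeg2 G ↔
      ∃ k, G.IsRegularOfDegree k) := by
  obtain ⟨ht, hroot⟩ := ht₀
  have hΔ : (0 : ℝ) < G.maxDegree :=
    (Nat.cast_nonneg _).lt_of_ne' fun h => by simp only [h, div_zero] at hratio; linarith [ht.1]
  have hirr : Irrational (t₀ * G.maxDegree) :=
    (irrational_of_cubic_root ht hroot).mul_natCast (by exact_mod_cast hΔ.ne')
  have hlow (v : V) : t₀ * G.maxDegree < G.degree v :=
    (((le_div_iff₀ hΔ).1 hratio).trans (Nat.cast_le.2 (G.minDegree_le_degree v))).lt_of_ne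
      (hirr.ne_nat _)
  have hup (v : V) : (G.degree v : ℝ) ≤ G.maxDegree := Nat.cast_le.2 (G.degree_le_maxDegree v)
  have hpos (v : V) : (0 : ℝ) < G.degree v := (mul_pos ht.1 hΔ).trans (hlow v)
  have hle (u v : V) (_ : G.Adj u v) := (one_div_sqrt_mul_le_iff (hpos u) (hpos v) hΔ.le).2
    (sum_pow_four_le ht.1 hroot hΔ (hlow u).le (hup u) (hlow v).le (hup v))
  have heq (u v : V) := (one_div_sqrt_mul_eq_iff (hpos u) (hpos v) hΔ.le).trans
    (sum_pow_four_eq_iff ht.1 hroot hΔ (hlow u) (hup u) (hlow v) (hup v))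
  refine ⟨randicIndex_le_mul_sumConnectivityNeg2 hle, ?_⟩
  simp only [randicIndex_eq_mul_sumConnectivityNeg2_iff hle, heq, Nat.cast_inj,
    G.exists_isRegularOfDegree_iff_forall_degree_eq_maxDegree]
  refine ⟨fun h u => ?_, fun h u v _ => ⟨h u, h v⟩⟩
  obtain ⟨v, huv⟩ := (G.degree_pos_iff_exists_adj u).1 (by exact_mod_cast hpos u)
  exact (h u v huv).1

theorem randic_upper_regular [Fintype V] (G : SimpleGraph V) [DecidableRel G.Adj]
    (hiso : ∀ v : V, 0 < G.degree v) (t₀ : ℝ)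
    (ht₀ : t₀ ∈ Set.Ioo (0:ℝ) 1 ∧ t₀^3 + 5*t₀^2 + 11*t₀ - 1 = 0)
    (hratio : t₀ ≤ (G.minDegree : ℝ) / (G.maxDegree : ℝ)) :
    randicIndex G ≤ 4 * (G.maxDegree : ℝ) * sumConnectivityNeg2 G ∧
    (randicIndex G = 4 * (G.maxDegree : ℝ) * sumConnectivityNeg2 G ↔
      ∃ k, G.IsRegularOfDegree k) :=
  randic_upper_regular_general G t₀ ht₀ hratio
end

section
/- Let G be a finite simple graph with no isolated vertices, n vertices, minimum degree δ and maximum degree Δ. Then (√(Δδ)/(Δ+δ))·n ≤ R(G) ≤ n/2, where R(G) is the Randić index. -/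
open Finset

variable {V : Type*}

private lemma pt_upper {x y : ℝ} (hx : 0 < x) (hy : 0 < y) :
    1 / Real.sqrt (x * y) ≤ (1 / x + 1 / y) / 2 := by
  obtain ⟨a, hap, rfl⟩ : ∃ a, 0 < a ∧ x = a ^ 2 :=
    ⟨Real.sqrt x, Real.sqrt_pos.2 hx, (Real.sq_sqrt hx.le).symm⟩
  obtain ⟨b, hbp, rfl⟩ : ∃ b, 0 < b ∧ y = b ^ 2 :=
    ⟨Real.sqrt y, Real.sqrt_pos.2 hy, (Real.sq_sqrt hy.le).symm⟩
  rw [Real.sqrt_mul (by positivity), Real.sqrt_sq hap.le, Real.sqrt_sq hbp.le]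
  rw [div_add_div _ _ (by positivity) (by positivity), div_div,
    div_le_div_iff₀ (by positivity) (by positivity)]
  nlinarith [sq_nonneg (a - b), sq_nonneg (a * b), mul_pos hap hbp]

private lemma pt_lower {p q x y : ℝ} (hp : 0 < p) (hpx : p ≤ x) (hxq : x ≤ q)
    (hpy : p ≤ y) (hyq : y ≤ q) :
    Real.sqrt (q * p) / (q + p) * (1 / x + 1 / y) ≤ 1 / Real.sqrt (x * y) := by
  have hq : 0 < q := hp.trans_le (hpx.trans hxq)
  obtain ⟨P, hP, rfl⟩ : ∃ P, 0 < P ∧ p = P ^ 2 :=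
    ⟨Real.sqrt p, Real.sqrt_pos.2 hp, (Real.sq_sqrt hp.le).symm⟩
  obtain ⟨Q, hQ, rfl⟩ : ∃ Q, 0 < Q ∧ q = Q ^ 2 :=
    ⟨Real.sqrt q, Real.sqrt_pos.2 hq, (Real.sq_sqrt hq.le).symm⟩
  obtain ⟨a, ha, rfl⟩ : ∃ a, 0 < a ∧ x = a ^ 2 :=
    ⟨Real.sqrt x, Real.sqrt_pos.2 (hp.trans_le hpx), (Real.sq_sqrt (hp.trans_le hpx).le).symm⟩
  obtain ⟨b, hb, rfl⟩ : ∃ b, 0 < b ∧ y = b ^ 2 :=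
    ⟨Real.sqrt y, Real.sqrt_pos.2 (hp.trans_le hpy), (Real.sq_sqrt (hp.trans_le hpy).le).symm⟩
  rw [Real.sqrt_mul (by positivity), Real.sqrt_sq hQ.le, Real.sqrt_sq hP.le,
    Real.sqrt_mul (by positivity), Real.sqrt_sq ha.le, Real.sqrt_sq hb.le]
  have hPa : P ≤ a := by nlinarith
  have hPb : P ≤ b := by nlinarith
  have haQ : a ≤ Q := by nlinarith
  have hbQ : b ≤ Q := by nlinarith
  have h1 : 0 ≤ Q * a - P * b := by nlinarith
  have h2 : 0 ≤ Q * b - P * a := by nlinarith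
  have key : Q * P * (a ^ 2 + b ^ 2) ≤ (Q ^ 2 + P ^ 2) * (a * b) := by
    nlinarith [mul_nonneg h1 h2]
  rw [div_add_div _ _ (by positivity) (by positivity),
    div_mul_div_comm, div_le_div_iff₀ (by positivity) (by positivity)]
  nlinarith [mul_pos ha hb, mul_le_mul_of_nonneg_right key (mul_pos ha hb).le]

private lemma sum_neighbor [Fintype V] (G : SimpleGraph V) [DecidableRel G.Adj] (f : V → ℝ) :
    ∑ u, ∑ v ∈ G.neighborFinset u, f v = ∑ v, (G.degree v : ℝ) * f v := by
  rw [Finset.sum_comm' (t' := Finset.univ) (s' := fun v => G.neighborFinset v)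
    (fun x y => by simp [SimpleGraph.adj_comm])]
  simp [SimpleGraph.card_neighborFinset_eq_degree, mul_comm]

theorem randic_global_bounds [Fintype V] (G : SimpleGraph V) [DecidableRel G.Adj]
    (hiso : ∀ v : V, 0 < G.degree v) :
    Real.sqrt ((G.maxDegree : ℝ) * (G.minDegree : ℝ)) /
        ((G.maxDegree : ℝ) + (G.minDegree : ℝ)) * (Fintype.card V : ℝ) ≤ randicIndex G ∧
    randicIndex G ≤ (Fintype.card V : ℝ) / 2 := by
  cases isEmpty_or_nonempty V with
  | inl h =>
    simp [randicIndex, Fintype.card_eq_zero]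
  | inr h =>
    have hdeg : ∀ u v : V, G.Adj u v → (G.minDegree : ℝ) ≤ G.degree u ∧
        (G.degree u : ℝ) ≤ G.maxDegree := fun u v _ =>
      ⟨by exact_mod_cast G.minDegree_le_degree u, by exact_mod_cast G.degree_le_maxDegree u⟩
    have hδ : 0 < (G.minDegree : ℝ) := by
      obtain ⟨v, hv⟩ := G.exists_minimal_degree_vertex
      exact_mod_cast hv ▸ hiso v
    -- key sum identity
    have hsum1 : ∑ u, ∑ v ∈ G.neighborFinset u, (1 / (G.degree u : ℝ)) =
        (Fintype.card V : ℝ) := by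
      rw [Finset.sum_congr rfl (fun u _ => Finset.sum_const (1 / (G.degree u : ℝ)))]
      simp only [SimpleGraph.card_neighborFinset_eq_degree, nsmul_eq_mul]
      rw [Finset.sum_congr rfl (fun u _ => mul_one_div (G.degree u : ℝ) _)]
      rw [Finset.sum_congr rfl (fun u _ => div_self (by exact_mod_cast (hiso u).ne'))]
      simp
    have hsum2 : ∑ u, ∑ v ∈ G.neighborFinset u, (1 / (G.degree v : ℝ)) =
        (Fintype.card V : ℝ) := by
      rw [sum_neighbor]
      rw [Finset.sum_congr rfl (fun u _ => mul_one_div (G.degree u : ℝ) _)]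
      rw [Finset.sum_congr rfl (fun u _ => div_self (by exact_mod_cast (hiso u).ne'))]
      simp
    have hsum : ∑ u, ∑ v ∈ G.neighborFinset u,
        (1 / (G.degree u : ℝ) + 1 / (G.degree v : ℝ)) = 2 * (Fintype.card V : ℝ) := by
      rw [Finset.sum_congr rfl (fun u _ => Finset.sum_add_distrib)]
      rw [Finset.sum_add_distrib, hsum1, hsum2]; ring
    constructor
    · have hle : ∑ u, ∑ v ∈ G.neighborFinset u,
          Real.sqrt ((G.maxDegree : ℝ) * (G.minDegree : ℝ)) /
            ((G.maxDegree : ℝ) + (G.minDegree : ℝ)) *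
            (1 / (G.degree u : ℝ) + 1 / (G.degree v : ℝ)) ≤
          ∑ u, ∑ v ∈ G.neighborFinset u,
            1 / Real.sqrt ((G.degree u : ℝ) * (G.degree v : ℝ)) := by
        refine Finset.sum_le_sum fun u _ => Finset.sum_le_sum fun v hv => ?_
        rw [SimpleGraph.mem_neighborFinset] at hv
        exact pt_lower hδ (hdeg u v hv).1 (hdeg u v hv).2
          (hdeg v u hv.symm).1 (hdeg v u hv.symm).2
      have heq : ∑ u, ∑ v ∈ G.neighborFinset u,
          Real.sqrt ((G.maxDegree : ℝ) * (G.minDegree : ℝ)) /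
            ((G.maxDegree : ℝ) + (G.minDegree : ℝ)) *
            (1 / (G.degree u : ℝ) + 1 / (G.degree v : ℝ)) =
          Real.sqrt ((G.maxDegree : ℝ) * (G.minDegree : ℝ)) /
            ((G.maxDegree : ℝ) + (G.minDegree : ℝ)) * (2 * (Fintype.card V : ℝ)) := by
        rw [← hsum, Finset.mul_sum]
        exact Finset.sum_congr rfl fun u _ => by rw [Finset.mul_sum]
      rw [randicIndex]
      calc Real.sqrt ((G.maxDegree : ℝ) * (G.minDegree : ℝ)) /
            ((G.maxDegree : ℝ) + (G.minDegree : ℝ)) * (Fintype.card V : ℝ)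
          = (1 / 2) * (Real.sqrt ((G.maxDegree : ℝ) * (G.minDegree : ℝ)) /
            ((G.maxDegree : ℝ) + (G.minDegree : ℝ)) * (2 * (Fintype.card V : ℝ))) := by ring
        _ ≤ _ := by
            rw [← heq]
            have : (0:ℝ) < 2 := two_pos
            linarith [hle]
    · have hle : ∑ u, ∑ v ∈ G.neighborFinset u,
          1 / Real.sqrt ((G.degree u : ℝ) * (G.degree v : ℝ)) ≤
          ∑ u, ∑ v ∈ G.neighborFinset u,
            (1 / (G.degree u : ℝ) + 1 / (G.degree v : ℝ)) / 2 := by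
        refine Finset.sum_le_sum fun u _ => Finset.sum_le_sum fun v hv => ?_
        rw [SimpleGraph.mem_neighborFinset] at hv
        exact pt_upper (by exact_mod_cast hiso u) (by exact_mod_cast hiso v)
      have heq : ∑ u, ∑ v ∈ G.neighborFinset u,
          (1 / (G.degree u : ℝ) + 1 / (G.degree v : ℝ)) / 2 = (Fintype.card V : ℝ) := by
        rw [Finset.sum_congr rfl (fun u _ => (Finset.sum_div _ _ 2).symm),
          ← Finset.sum_div, hsum]
        ring
      rw [randicIndex]
      rw [heq] at hle
      linarith
end

section
/- Let G be a finite simple graph with no isolated vertices and n vertices, and define δ_G = min_{uv∈E(G)} 2√(d_u d_v)/(d_u+d_v) and Δ_G = max_{uv∈E(G)} 2√(d_u d_v)/(d_u+d_v). Then n·δ_G/2 ≤ R(G) ≤ n·Δ_G/2. -/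
/-!
Each term of the Randić index factors as `1 / √(d_u d_v) = r(d_u, d_v) · (1/d_u + 1/d_v) / 2`,
with `r(a, b) = 2√(ab) / (a + b)` the ratio of the geometric to the arithmetic mean. Over ordered
adjacent pairs the weights `1/d_u + 1/d_v` sum to `2n`: each vertex `u` is the first entry of exactly
`d_u` pairs and the second entry of `d_u` pairs, contributing `d_u · (1/d_u) = 1` from each side. Hence `4 R(G)` is a weighted sum of the
values `r(d_u, d_v)` of total weight `2n`, and so lies between `2n δ_G` and `2n Δ_G`.
-/

open Finset

variable {V : Type*}

noncomputable def geomArithRatio (a b : ℝ) : ℝ := 2 * √(a * b) / (a + b)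

lemma one_div_sqrt_mul_eq_geomArithRatio_mul {a b : ℝ} (ha : 0 < a) (hb : 0 < b) :
    1 / √(a * b) = geomArithRatio a b * (1 / a + 1 / b) / 2 := by
  have hsq : √(a * b) ^ 2 = a * b := Real.sq_sqrt (mul_pos ha hb).le
  have hs : 0 < √(a * b) := Real.sqrt_pos.mpr (mul_pos ha hb)
  unfold geomArithRatio
  field_simp
  rw [hsq]
  ring

namespace SimpleGraph

variable [Fintype V] (G : SimpleGraph V) [DecidableRel G.Adj]

lemma sum_sum_neighborFinset_comm {M : Type*} [AddCommMonoid M] (f : V → V → M) :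
    ∑ u, ∑ v ∈ G.neighborFinset u, f u v = ∑ v, ∑ u ∈ G.neighborFinset v, f u v :=
  Finset.sum_comm' fun u v => by simp [adj_comm]

lemma sum_sum_neighborFinset_inv_degree (hiso : ∀ v, 0 < G.degree v) :
    ∑ u, ∑ _v ∈ G.neighborFinset u, 1 / (G.degree u : ℝ) = Fintype.card V := by
  have hone (u : V) : ∑ _v ∈ G.neighborFinset u, 1 / (G.degree u : ℝ) = 1 := by
    rw [sum_const, card_neighborFinset_eq_degree, nsmul_eq_mul, mul_one_div,
      div_self (Nat.cast_ne_zero.mpr (hiso u).ne')]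
  simp only [hone, sum_const, card_univ, nsmul_one]

lemma sum_sum_neighborFinset_inv_degree_add (hiso : ∀ v, 0 < G.degree v) :
    ∑ u, ∑ v ∈ G.neighborFinset u, (1 / (G.degree u : ℝ) + 1 / G.degree v) =
      2 * Fintype.card V := by
  rw [sum_congr rfl fun u _ => sum_add_distrib, sum_add_distrib,
    G.sum_sum_neighborFinset_comm fun _ v => 1 / (G.degree v : ℝ),
    G.sum_sum_neighborFinset_inv_degree hiso]
  ring

lemma randicIndex_eq_sum_geomArithRatio_mul :
    randicIndex G = (∑ u, ∑ v ∈ G.neighborFinset u,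
      geomArithRatio (G.degree u) (G.degree v) * (1 / (G.degree u : ℝ) + 1 / G.degree v)) / 4 := by
  have hterm (u v : V) (huv : G.Adj u v) :
      1 / √((G.degree u : ℝ) * G.degree v) =
        geomArithRatio (G.degree u) (G.degree v) * (1 / (G.degree u : ℝ) + 1 / G.degree v) / 2 :=
    one_div_sqrt_mul_eq_geomArithRatio_mul
      (Nat.cast_pos.mpr ((G.degree_pos_iff_exists_adj u).mpr ⟨v, huv⟩))
      (Nat.cast_pos.mpr ((G.degree_pos_iff_exists_adj v).mpr ⟨u, huv.symm⟩))
  rw [randicIndex, sum_congr rfl fun u _ => sum_congr rfl fun v hv =>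
    hterm u v ((G.mem_neighborFinset u v).mp hv)]
  simp only [← sum_div]
  ring

variable {G}

lemma le_randicIndex (hiso : ∀ v, 0 < G.degree v) {c : ℝ}
    (hc : ∀ u v, G.Adj u v → c ≤ geomArithRatio (G.degree u) (G.degree v)) :
    Fintype.card V * c / 2 ≤ randicIndex G := by
  have hsum : ∑ u, ∑ v ∈ G.neighborFinset u, c * (1 / (G.degree u : ℝ) + 1 / G.degree v) ≤
      ∑ u, ∑ v ∈ G.neighborFinset u,
        geomArithRatio (G.degree u) (G.degree v) * (1 / (G.degree u : ℝ) + 1 / G.degree v) :=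
    sum_le_sum fun u _ => sum_le_sum fun v hv => mul_le_mul_of_nonneg_right
      (hc u v ((G.mem_neighborFinset u v).mp hv)) (by positivity)
  simp only [← mul_sum, G.sum_sum_neighborFinset_inv_degree_add hiso] at hsum
  rw [G.randicIndex_eq_sum_geomArithRatio_mul]
  linarith

lemma randicIndex_le (hiso : ∀ v, 0 < G.degree v) {C : ℝ}
    (hC : ∀ u v, G.Adj u v → geomArithRatio (G.degree u) (G.degree v) ≤ C) :
    randicIndex G ≤ Fintype.card V * C / 2 := by
  have hsum : ∑ u, ∑ v ∈ G.neighborFinset u,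
        geomArithRatio (G.degree u) (G.degree v) * (1 / (G.degree u : ℝ) + 1 / G.degree v) ≤
      ∑ u, ∑ v ∈ G.neighborFinset u, C * (1 / (G.degree u : ℝ) + 1 / G.degree v) :=
    sum_le_sum fun u _ => sum_le_sum fun v hv => mul_le_mul_of_nonneg_right
      (hC u v ((G.mem_neighborFinset u v).mp hv)) (by positivity)
  simp only [← mul_sum, G.sum_sum_neighborFinset_inv_degree_add hiso] at hsum
  rw [G.randicIndex_eq_sum_geomArithRatio_mul]
  linarith

end SimpleGraph

theorem randic_deltaG_bounds [Fintype V] (G : SimpleGraph V) [DecidableRel G.Adj]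
    (hiso : ∀ v : V, 0 < G.degree v) (δG ΔG : ℝ)
    (hδG : IsLeast {x : ℝ | ∃ u v, G.Adj u v ∧
      x = 2 * Real.sqrt ((G.degree u : ℝ) * (G.degree v : ℝ)) /
        ((G.degree u : ℝ) + (G.degree v : ℝ))} δG)
    (hΔG : IsGreatest {x : ℝ | ∃ u v, G.Adj u v ∧
      x = 2 * Real.sqrt ((G.degree u : ℝ) * (G.degree v : ℝ)) /
        ((G.degree u : ℝ) + (G.degree v : ℝ))} ΔG) :
    (Fintype.card V : ℝ) * δG / 2 ≤ randicIndex G ∧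
    randicIndex G ≤ (Fintype.card V : ℝ) * ΔG / 2 :=
  ⟨SimpleGraph.le_randicIndex hiso fun u v huv => hδG.2 ⟨u, v, huv, rfl⟩,
    SimpleGraph.randicIndex_le hiso fun u v huv => hΔG.2 ⟨u, v, huv, rfl⟩⟩
end

section
/- (Szőkefalvi Nagy inequality) If a_1, …, a_k are nonnegative real numbers with R = max_j a_j and r = min_j a_j, then k·Σ_j a_j² − (Σ_j a_j)² ≥ (k/2)·(R − r)². -/
/-!
Put `S = ∑ aⱼ`. The identity `∑ⱼ (k aⱼ - S)² = k (k ∑ aⱼ² - S²)` turns the left-hand side into a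
sum of squares, and two of its terms, those at the indices where `R` and `r` are attained, already
give `(k(R - r))² / 2` because `(x - y)² ≤ 2 (x² + y²)`.
-/

open Finset Fintype

variable {ι R : Type*} [Fintype ι]

theorem sum_card_mul_sub_sum_sq [CommRing R] (f : ι → R) :
    ∑ i, ((card ι : R) * f i - ∑ j, f j) ^ 2 =
      card ι * (card ι * ∑ i, f i ^ 2 - (∑ i, f i) ^ 2) := by
  simp only [sub_sq, mul_pow, sum_add_distrib, sum_sub_distrib, ← mul_sum, ← sum_mul, sum_const,
    card_univ, nsmul_eq_mul]
  ring

variable [CommRing R] [LinearOrder R] [IsStrictOrderedRing R]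

theorem sq_sub_le_two_mul_sum_sq (f : ι → R) (i j : ι) :
    (f i - f j) ^ 2 ≤ 2 * ∑ k, f k ^ 2 := by
  rcases eq_or_ne i j with rfl | hij
  · simpa using sum_nonneg fun k _ => sq_nonneg (f k)
  calc (f i - f j) ^ 2 = (f i + -f j) ^ 2 := by rw [sub_eq_add_neg]
    _ ≤ 2 * (f i ^ 2 + f j ^ 2) := by simpa only [neg_sq] using add_sq_le (a := f i) (b := -f j)
    _ ≤ 2 * ∑ k, f k ^ 2 := by
      gcongr
      exact add_le_sum (fun k _ => sq_nonneg (f k)) (mem_univ i) (mem_univ j) hij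

theorem card_mul_sq_sub_le_two_mul (f : ι → R) (i j : ι) :
    card ι * (f i - f j) ^ 2 ≤ 2 * (card ι * ∑ k, f k ^ 2 - (∑ k, f k) ^ 2) := by
  have hk : (0 : R) < card ι := by
    have : Nonempty ι := ⟨i⟩
    exact_mod_cast Fintype.card_pos
  refine le_of_mul_le_mul_left ?_ hk
  set g : ι → R := fun k => card ι * f k - ∑ l, f l
  calc (card ι : R) * (card ι * (f i - f j) ^ 2) = (g i - g j) ^ 2 := by ring
    _ ≤ 2 * ∑ k, g k ^ 2 := sq_sub_le_two_mul_sum_sq g i j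
    _ = card ι * (2 * (card ι * ∑ k, f k ^ 2 - (∑ k, f k) ^ 2)) := by
      rw [sum_card_mul_sub_sum_sq]; ring

theorem szokefalvi_nagy_general (k : ℕ) (a : Fin k → ℝ)
    (R r : ℝ) (hR : IsGreatest (Set.range a) R) (hr : IsLeast (Set.range a) r) :
    (k : ℝ) * ∑ j, (a j)^2 - (∑ j, a j)^2 ≥ (k : ℝ) / 2 * (R - r)^2 := by
  obtain ⟨⟨p, rfl⟩, -⟩ := hR
  obtain ⟨⟨q, rfl⟩, -⟩ := hr
  have h := card_mul_sq_sub_le_two_mul a p q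
  rw [Fintype.card_fin] at h
  linarith

theorem szokefalvi_nagy (k : ℕ) (hk : 1 ≤ k) (a : Fin k → ℝ) (ha : ∀ j, 0 ≤ a j)
    (R r : ℝ) (hR : IsGreatest (Set.range a) R) (hr : IsLeast (Set.range a) r) :
    (k : ℝ) * ∑ j, (a j)^2 - (∑ j, a j)^2 ≥ (k : ℝ) / 2 * (R - r)^2 :=
  szokefalvi_nagy_general k a R r hR hr
end

section
/- Let G be a finite simple graph with no isolated vertices and m edges, and let Π = max_{uv∈E(G)} (d_u d_v)^{-1/2} and π = min_{uv∈E(G)} (d_u d_v)^{-1/2}. Then R(G) ≤ √(m·M_2^{-1}(G) − (m/2)(Π − π)²), where M_2^{-1}(G) = Σ_{uv∈E(G)} 1/(d_u d_v). Equality holds if G is regular or biregular. -/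
open Finset

variable {V : Type*}

lemma key_ineq' {α : Type*} [DecidableEq α] (s : Finset α) (y : α → ℝ) (P p : ℝ)
    (hA : ∃ a ∈ s, ∃ a' ∈ s, a ≠ a' ∧ y a = P ∧ y a' = P)
    (hB : ∃ b ∈ s, ∃ b' ∈ s, b ≠ b' ∧ y b = p ∧ y b' = p)
    (hub : ∀ x ∈ s, y x ≤ P) (hlb : ∀ x ∈ s, p ≤ y x) :
    (∑ x ∈ s, y x) ^ 2 ≤
      (s.card : ℝ) * ∑ x ∈ s, (y x) ^ 2 - (s.card : ℝ) * (P - p) ^ 2 := by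
  obtain ⟨a, ha, a', ha', haa, hya, hya'⟩ := hA
  obtain ⟨b, hb, b', hb', hbb, hyb, hyb'⟩ := hB
  have hne : s.Nonempty := ⟨a, ha⟩
  have hn : (0:ℝ) < (s.card : ℝ) := by exact_mod_cast Finset.card_pos.mpr hne
  set n : ℝ := (s.card : ℝ) with hndef
  set yb : ℝ := (∑ x ∈ s, y x) / n with hybar
  have hT : ∑ x ∈ s, (y x - yb) ^ 2 =
      ∑ x ∈ s, (y x) ^ 2 - (∑ x ∈ s, y x) ^ 2 / n := by
    have h1 : ∑ x ∈ s, (y x - yb) ^ 2 =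
        ∑ x ∈ s, ((y x) ^ 2 - 2 * yb * y x + yb ^ 2) := by
      apply Finset.sum_congr rfl; intro x _; ring
    rw [h1, Finset.sum_add_distrib, Finset.sum_sub_distrib, ← Finset.mul_sum,
      Finset.sum_const, nsmul_eq_mul, ← hndef, hybar]
    field_simp
    ring
  have hpP : p ≤ P := hyb ▸ hub b hb
  have hTge : (P - p) ^ 2 ≤ ∑ x ∈ s, (y x - yb) ^ 2 := by
    rcases eq_or_lt_of_le hpP with hPp | hPp
    · have : (P - p) ^ 2 = 0 := by rw [hPp]; ring
      rw [this]
      exact Finset.sum_nonneg fun x _ => sq_nonneg _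
    · have hab : a ≠ b := fun h => by rw [h, hyb] at hya; exact hPp.ne hya
      have hab' : a ≠ b' := fun h => by rw [h, hyb'] at hya; exact hPp.ne hya
      have ha'b : a' ≠ b := fun h => by rw [h, hyb] at hya'; exact hPp.ne hya'
      have ha'b' : a' ≠ b' := fun h => by rw [h, hyb'] at hya'; exact hPp.ne hya'
      have hsub : ({a, a', b, b'} : Finset α) ⊆ s := by
        intro x hx
        simp only [Finset.mem_insert, Finset.mem_singleton] at hx
        rcases hx with h|h|h|h <;> subst h <;> assumption
      have hsum4 : ∑ x ∈ ({a, a', b, b'} : Finset α), (y x - yb) ^ 2 =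
          (P - yb)^2 + (P - yb)^2 + (p - yb)^2 + (p - yb)^2 := by
        rw [Finset.sum_insert (by simp [haa, hab, hab']),
          Finset.sum_insert (by simp [ha'b, ha'b']),
          Finset.sum_pair hbb, hya, hya', hyb, hyb']
        ring
      have hle : ∑ x ∈ ({a, a', b, b'} : Finset α), (y x - yb) ^ 2 ≤
          ∑ x ∈ s, (y x - yb) ^ 2 :=
        Finset.sum_le_sum_of_subset_of_nonneg hsub fun x _ _ => sq_nonneg _
      nlinarith [sq_nonneg (P + p - 2 * yb)]
  have h2 : n * (P - p) ^ 2 ≤ n * (∑ x ∈ s, (y x) ^ 2 - (∑ x ∈ s, y x) ^ 2 / n) :=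
    mul_le_mul_of_nonneg_left (hTge.trans_eq hT) hn.le
  have h3 : n * ((∑ x ∈ s, y x) ^ 2 / n) = (∑ x ∈ s, y x) ^ 2 :=
    mul_div_cancel₀ _ hn.ne'
  nlinarith [h2, h3]

lemma sum_pairs' [Fintype V] (G : SimpleGraph V) [DecidableRel G.Adj] (f : V → V → ℝ) :
    ∑ u, ∑ v ∈ G.neighborFinset u, f u v =
      ∑ z ∈ (univ ×ˢ univ).filter (fun z : V × V => G.Adj z.1 z.2), f z.1 z.2 := by
  rw [Finset.sum_filter, Finset.sum_product]
  refine Finset.sum_congr rfl fun u _ => ?_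
  rw [SimpleGraph.neighborFinset_eq_filter, Finset.sum_filter]

lemma card_pairs' [Fintype V] (G : SimpleGraph V) [DecidableRel G.Adj] :
    ((univ ×ˢ univ).filter (fun z : V × V => G.Adj z.1 z.2)).card =
      2 * G.edgeFinset.card := by
  rw [← SimpleGraph.sum_degrees_eq_twice_card_edges, Finset.card_filter,
    Finset.sum_product]
  refine Finset.sum_congr rfl fun u _ => ?_
  rw [SimpleGraph.degree, SimpleGraph.neighborFinset_eq_filter, Finset.card_filter]

/-- Variable second Zagreb index with exponent -1: `M₂^{-1}(G) = Σ_{uv∈E} 1/(d_u d_v)`. -/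
noncomputable def zagreb2inv [Fintype V] (G : SimpleGraph V) [DecidableRel G.Adj] : ℝ :=
  (1 / 2) * ∑ u, ∑ v ∈ G.neighborFinset u,
    1 / ((G.degree u : ℝ) * (G.degree v : ℝ))

set_option maxHeartbeats 1000000 in
theorem randic_szokefalvi_bound [Fintype V] (G : SimpleGraph V) [DecidableRel G.Adj]
    (hiso : ∀ v : V, 0 < G.degree v) (hm : 1 ≤ G.edgeFinset.card) (P p : ℝ)
    (hP : IsGreatest {x : ℝ | ∃ u v, G.Adj u v ∧
      x = 1 / Real.sqrt ((G.degree u : ℝ) * (G.degree v : ℝ))} P)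
    (hp : IsLeast {x : ℝ | ∃ u v, G.Adj u v ∧
      x = 1 / Real.sqrt ((G.degree u : ℝ) * (G.degree v : ℝ))} p) :
    randicIndex G ≤ Real.sqrt ((G.edgeFinset.card : ℝ) * zagreb2inv G -
      (G.edgeFinset.card : ℝ) / 2 * (P - p)^2) ∧
    (((∃ k, G.IsRegularOfDegree k) ∨
        (∀ u v, G.Adj u v →
          ({G.degree u, G.degree v} : Set ℕ) = {G.minDegree, G.maxDegree})) →
      randicIndex G = Real.sqrt ((G.edgeFinset.card : ℝ) * zagreb2inv G -
        (G.edgeFinset.card : ℝ) / 2 * (P - p)^2)) := by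
  classical
  set s : Finset (V × V) := (univ ×ˢ univ).filter (fun z : V × V => G.Adj z.1 z.2) with hs
  set y : V × V → ℝ :=
    fun z => 1 / Real.sqrt ((G.degree z.1 : ℝ) * (G.degree z.2 : ℝ)) with hy
  set m : ℝ := (G.edgeFinset.card : ℝ) with hmr
  have hmem : ∀ z : V × V, z ∈ s ↔ G.Adj z.1 z.2 := by intro z; simp [hs]
  have hmemadj : ∀ {u v : V}, G.Adj u v → ((u, v) ∈ s) := fun h => (hmem _).mpr h
  have hR : randicIndex G = (1/2) * ∑ z ∈ s, y z := by
    rw [randicIndex, sum_pairs']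
  have hpos : ∀ z ∈ s, (0:ℝ) < (G.degree z.1 : ℝ) * (G.degree z.2 : ℝ) := by
    intro z _
    have h1 := hiso z.1; have h2 := hiso z.2
    positivity
  have hM : zagreb2inv G = (1/2) * ∑ z ∈ s, (y z)^2 := by
    rw [zagreb2inv, sum_pairs']
    congr 1
    refine Finset.sum_congr rfl fun z hz => ?_
    have h := hpos z hz
    simp only [hy, div_pow, one_pow, Real.sq_sqrt h.le]
  have hcard : (s.card : ℝ) = 2 * m := by rw [hs, card_pairs']; push_cast; ring
  have hub : ∀ z ∈ s, y z ≤ P := fun z hz => hP.2 ⟨z.1, z.2, (hmem z).mp hz, rfl⟩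
  have hlb : ∀ z ∈ s, p ≤ y z := fun z hz => hp.2 ⟨z.1, z.2, (hmem z).mp hz, rfl⟩
  have hsymm : ∀ u v : V, y (v, u) = y (u, v) := by
    intro u v; simp only [hy]; rw [mul_comm]
  obtain ⟨u₁, v₁, hadj₁, hPeq⟩ := hP.1
  obtain ⟨u₂, v₂, hadj₂, hpeq⟩ := hp.1
  have hA : ∃ a ∈ s, ∃ a' ∈ s, a ≠ a' ∧ y a = P ∧ y a' = P := by
    refine ⟨(u₁, v₁), hmemadj hadj₁, (v₁, u₁), hmemadj hadj₁.symm, ?_,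
      hPeq.symm, by rw [hsymm]; exact hPeq.symm⟩
    intro h
    exact hadj₁.ne (congrArg Prod.fst h)
  have hB : ∃ b ∈ s, ∃ b' ∈ s, b ≠ b' ∧ y b = p ∧ y b' = p := by
    refine ⟨(u₂, v₂), hmemadj hadj₂, (v₂, u₂), hmemadj hadj₂.symm, ?_,
      hpeq.symm, by rw [hsymm]; exact hpeq.symm⟩
    intro h
    exact hadj₂.ne (congrArg Prod.fst h)
  have hkey := key_ineq' s y P p hA hB hub hlb
  rw [hcard] at hkey
  have hp0 : 0 ≤ p := by rw [hpeq]; positivity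
  have hR0 : 0 ≤ randicIndex G := by
    rw [hR]
    have : 0 ≤ ∑ z ∈ s, y z :=
      Finset.sum_nonneg fun z hz => hp0.trans (hlb z hz)
    linarith
  have hXge : randicIndex G ^ 2 ≤ m * zagreb2inv G - m / 2 * (P - p) ^ 2 := by
    rw [hR, hM]
    nlinarith [hkey]
  constructor
  · exact (Real.le_sqrt hR0 (le_trans (sq_nonneg _) hXge)).mpr hXge
  · intro hreg
    have hconst : ∃ c : ℝ, ∀ z ∈ s, y z = c := by
      rcases hreg with ⟨k, hk⟩ | hbi
      · refine ⟨1 / Real.sqrt ((k:ℝ) * (k:ℝ)), fun z _ => ?_⟩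
        simp only [hy, hk z.1, hk z.2]
      · refine ⟨1 / Real.sqrt ((G.minDegree : ℝ) * (G.maxDegree : ℝ)), fun z hz => ?_⟩
        have h := hbi z.1 z.2 ((hmem z).mp hz)
        have hprod : (G.degree z.1 : ℝ) * (G.degree z.2 : ℝ)
            = (G.minDegree : ℝ) * (G.maxDegree : ℝ) := by
          rcases Set.pair_eq_pair_iff.mp h with ⟨h1, h2⟩ | ⟨h1, h2⟩ <;>
            rw [h1, h2] <;> ring
        simp only [hy]
        rw [hprod]
    obtain ⟨c, hc⟩ := hconst
    have hPc : P = c := by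
      rw [hPeq, ← hc (u₁, v₁) (hmemadj hadj₁)]
    have hpc : p = c := by
      rw [hpeq, ← hc (u₂, v₂) (hmemadj hadj₂)]
    have hc0 : 0 ≤ c := hpc ▸ hp0
    have hm0 : (0:ℝ) ≤ m := by rw [hmr]; positivity
    have hsum : ∑ z ∈ s, y z = 2 * m * c := by
      rw [Finset.sum_congr rfl hc, Finset.sum_const, nsmul_eq_mul, hcard]
    have hsum2 : ∑ z ∈ s, (y z)^2 = 2 * m * c^2 := by
      rw [Finset.sum_congr rfl (fun z hz => by rw [hc z hz]),
        Finset.sum_const, nsmul_eq_mul, hcard]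
    rw [hR, hM, hsum, hsum2, hPc, hpc]
    have heq : m * (1 / 2 * (2 * m * c ^ 2)) - m / 2 * (c - c) ^ 2 = (m * c) ^ 2 := by
      ring
    rw [heq, Real.sqrt_sq (mul_nonneg hm0 hc0)]
    ring
end
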